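/- arXiv:1706.05390 — 2 statements merged into one kernel-verified Lean document; each statement's English description precedes it below -/
import Mathlib

section
/- Let α be an algebraic integer with minimal polynomial f(X) over Q, and let p be a rational prime such that f(X) mod p is a separable polynomial in F_p[X]. Then the product of all maximal ideals of Z[α] lying above p equals the principal ideal p·Z[α]. -/
/-!
Since `ℤ[α] ≅ ℤ[X]/(f)`, the ring `ℤ[α]/(p)` is `𝔽_p[X]/(f mod p)`: finite, and reduced because
`f mod p` is squarefree. In a ring `R` with an ideal `I` such that `R/I` is finite and reduced,
every prime containing `I` is maximal, there are finitely many, and being pairwise comaximal their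
product is their intersection, the radical of `I`, which is `I`. Finally, a maximal ideal lies
above `p` exactly when it contains `p`.
-/

open Polynomial

namespace Ideal

variable {R : Type*} [CommRing R] {I : Ideal R} [Finite (R ⧸ I)]

theorem IsPrime.isMaximal_of_le_of_finite_quotient {P : Ideal R} (hP : P.IsPrime)
    (hIP : I ≤ P) : P.IsMaximal :=
  have : Finite (R ⧸ P) := Finite.of_surjective _ (Quotient.factor_surjective hIP)
  Quotient.maximal_of_isField _ (Finite.isField_of_domain _)

theorem finite_setOf_le_of_finite_quotient : {P : Ideal R | I ≤ P}.Finite := by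
  have : Finite (Ideal (R ⧸ I)) := Finite.of_injective _ SetLike.coe_injective
  exact (Set.finite_range (comap (Quotient.mk I))).subset fun P hIP => ⟨_, comap_map_mk hIP⟩

theorem IsRadical.exists_finset_prod_isMaximal_eq (hI : I.IsRadical) :
    ∃ s : Finset (Ideal R), (∀ P, P ∈ s ↔ P.IsMaximal ∧ I ≤ P) ∧ ∏ P ∈ s, P = I := by
  have hfin : {P : Ideal R | P.IsMaximal ∧ I ≤ P}.Finite :=
    finite_setOf_le_of_finite_quotient.subset fun _ h => h.2
  have hprimes : {P : Ideal R | I ≤ P ∧ P.IsPrime} = {P | P.IsMaximal ∧ I ≤ P} := by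
    ext P
    exact ⟨fun h => ⟨h.2.isMaximal_of_le_of_finite_quotient h.1, h.1⟩,
      fun h => ⟨h.2, h.1.isPrime⟩⟩
  refine ⟨hfin.toFinset, fun P => hfin.mem_toFinset, ?_⟩
  rw [prod_eq_iInf_of_pairwise_isCoprime]
  · conv_rhs => rw [← hI.radical, radical_eq_sInf, hprimes, sInf_eq_iInf]
    simp only [Set.Finite.mem_toFinset]
  · intro P hP Q hQ hPQ
    exact isCoprime_iff_sup_eq.mpr <|
      (hfin.mem_toFinset.mp hP).1.coprime_of_ne (hfin.mem_toFinset.mp hQ).1 hPQ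

theorem comap_algebraMap_int_eq_span_natCast_iff {A : Type*} [CommRing A] {K : Ideal A}
    (hK : K ≠ ⊤) {p : ℕ} [Fact p.Prime] :
    K.comap (algebraMap ℤ A) = span {(p : ℤ)} ↔ (p : A) ∈ K := by
  have hmem : (p : A) ∈ K ↔ (p : ℤ) ∈ K.comap (algebraMap ℤ A) := by
    rw [mem_comap, map_natCast]
  rw [hmem]
  refine ⟨fun h => h ▸ subset_span rfl, fun h => ?_⟩
  exact ((Int.ideal_span_isMaximal_of_prime p).eq_of_le (comap_ne_top _ hK)
    (span_le.mpr (Set.singleton_subset_iff.mpr h))).symm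

end Ideal

noncomputable def AdjoinRoot.quotSpanNatCastEquiv (f : ℤ[X]) (n : ℕ) :
    AdjoinRoot f ⧸ Ideal.span {(n : AdjoinRoot f)} ≃+*
      AdjoinRoot (f.map (Int.castRingHom (ZMod n))) :=
  (Ideal.quotEquivOfEq (by simp [Ideal.map_span])).trans <|
    (quotAdjoinRootEquivQuotPolynomialQuot (Ideal.span {(n : ℤ)}) f).trans <|
      Ideal.quotientEquiv _ _ (mapEquiv (Int.quotientSpanNatEquivZMod n))
        (by simp [Ideal.map_span, Polynomial.map_map])

theorem AdjoinRoot.finite_of_monic {R : Type*} [CommRing R] [Finite R] {g : R[X]}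
    (hg : g.Monic) : Finite (AdjoinRoot g) :=
  have := hg.finite_adjoinRoot
  Module.finite_of_finite R

theorem AdjoinRoot.isReduced_of_squarefree {R : Type*} [CommRing R] [DecompositionMonoid R[X]]
    {g : R[X]} (hg : Squarefree g) : IsReduced (AdjoinRoot g) :=
  (Ideal.isRadical_iff_quotient_reduced _).mp (isRadical_iff_span_singleton.mp hg.isRadical)

noncomputable def minpoly.quotSpanNatCastAdjoinEquiv {S : Type*} [CommRing S] [IsDomain S]
    [Module.IsTorsionFree ℤ S] {x : S} (hx : IsIntegral ℤ x) (n : ℕ) :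
    Algebra.adjoin ℤ {x} ⧸ Ideal.span {(n : Algebra.adjoin ℤ {x})} ≃+*
      AdjoinRoot ((minpoly ℤ x).map (Int.castRingHom (ZMod n))) :=
  (Ideal.quotientEquiv _ _ (equivAdjoin hx).toRingEquiv.symm (by simp [Ideal.map_span])).trans
    (AdjoinRoot.quotSpanNatCastEquiv _ n)

/-- Let `α` be an algebraic integer with minimal polynomial `f`, and `p` a rational prime such
that `f mod p` is separable (no repeated irreducible factors, i.e. squarefree).  Then the
product of all maximal ideals of `ℤ[α]` lying above `p` equals the principal ideal `p·ℤ[α]`. -/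
theorem stmt_7 (α : ℂ) (hα : IsIntegral ℤ α) (p : ℕ) (hp : p.Prime)
    (hsep : Squarefree ((minpoly ℤ α).map (Int.castRingHom (ZMod p)))) :
    ∃ s : Finset (Ideal (Algebra.adjoin ℤ ({α} : Set ℂ))),
      (∀ 𝔭 : Ideal (Algebra.adjoin ℤ ({α} : Set ℂ)),
        𝔭 ∈ s ↔ 𝔭.IsMaximal ∧
          𝔭.comap (algebraMap ℤ (Algebra.adjoin ℤ ({α} : Set ℂ))) =
            Ideal.span {(p : ℤ)}) ∧
      ∏ 𝔭 ∈ s, 𝔭 = Ideal.span {(p : Algebra.adjoin ℤ ({α} : Set ℂ))} := by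
  have : Fact p.Prime := ⟨hp⟩
  let E := minpoly.quotSpanNatCastAdjoinEquiv hα p
  have : Finite (AdjoinRoot ((minpoly ℤ α).map (Int.castRingHom (ZMod p)))) :=
    AdjoinRoot.finite_of_monic ((minpoly.monic hα).map _)
  have := Finite.of_equiv _ E.symm.toEquiv
  have := AdjoinRoot.isReduced_of_squarefree hsep
  have hrad : (Ideal.span {(p : Algebra.adjoin ℤ ({α} : Set ℂ))}).IsRadical :=
    (Ideal.isRadical_iff_quotient_reduced _).mpr (isReduced_of_injective E E.injective)
  obtain ⟨s, hs, hprod⟩ := hrad.exists_finset_prod_isMaximal_eq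
  refine ⟨s, fun P => ?_, hprod⟩
  rw [hs, Ideal.span_singleton_le_iff_mem]
  exact and_congr_right fun hP => (Ideal.comap_algebraMap_int_eq_span_natCast_iff hP.ne_top).symm
end

section
/- Let n be a positive integer divisible by the prime p, write n = kq with q = p^r the exact power of p dividing n and gcd(k, p) = 1, and let ζ_n = exp(2πi/n) and ζ_q = ζ_n^k. Then for every maximal ideal 𝔭 of Z[ζ_n] lying above p, the maximal ideal of the localization of Z[ζ_n] at 𝔭 is the principal ideal generated by ζ_q − 1. -/
/-!
Let `t = ζ_n`, `π = t^k - 1` and `L = ℤ[ζ_n]_𝔭`. As `t^k` is a primitive `p^r`-th root of unity,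
`t^k - 1` divides `Φ_{p^r}(1) = p`, and `π ∈ 𝔭` because `π^{p^r} ≡ t^n - 1 = 0` modulo `p ∈ 𝔭`.
A prime of `L` containing `π` contains `p`, so it contracts to a maximal ideal of the integral
extension `ℤ[ζ_n]` of `ℤ` lying inside `𝔭`, i.e. to `𝔭`: the radical of `πL` is the maximal ideal.
On the other hand `L/πL` has characteristic `p` and `t^k = 1` there; since `k ∣ p^φ(k) - 1`, the
`φ(k)`-th power of Frobenius fixes `t`, hence all of `L/πL`, which is therefore reduced.
-/

open IsLocalRing

theorem isReduced_of_forall_pow_eq_self {R : Type*} [MonoidWithZero R] {N : ℕ} (hN : 2 ≤ N)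
    (h : ∀ x : R, x ^ N = x) : IsReduced R := by
  refine ⟨fun x ⟨m, hm⟩ => ?_⟩
  have hiter : ∀ j, x ^ N ^ j = x := fun j => by
    induction j with
    | zero => simp
    | succ j ih => rw [pow_succ, pow_mul, ih, h]
  rw [← hiter m]
  exact pow_eq_zero_of_le (Nat.lt_pow_self hN).le hm

theorem IsLocalRing.eq_maximalIdeal_of_isRadical {R : Type*} [CommRing R] [IsLocalRing R]
    {I : Ideal R} (hI : I.IsRadical) (hle : I ≤ maximalIdeal R)
    (h : ∀ P : Ideal R, P.IsPrime → I ≤ P → P = maximalIdeal R) : I = maximalIdeal R := by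
  refine le_antisymm hle ?_
  rw [← hI.radical, Ideal.radical_eq_sInf]
  exact le_sInf fun P ⟨hIP, hP⟩ => (h P hP hIP).ge

theorem Ideal.IsPrime.isMaximal_of_natCast_mem {B : Type*} [CommRing B] [Algebra.IsIntegral ℤ B]
    {Q : Ideal B} [Q.IsPrime] {p : ℕ} (hp : p.Prime) (h : (p : B) ∈ Q) : Q.IsMaximal := by
  refine Ideal.isMaximal_of_isIntegral_of_isMaximal_comap (R := ℤ) Q (IsPrime.to_maximal_ideal ?_)
  exact (Submodule.ne_bot_iff _).2 ⟨p, by simpa using h, by exact_mod_cast hp.ne_zero⟩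

theorem Localization.AtPrime.eq_maximalIdeal_of_natCast_mem {B : Type*} [CommRing B]
    [Algebra.IsIntegral ℤ B] {𝔭 : Ideal B} [𝔭.IsPrime] {P : Ideal (Localization.AtPrime 𝔭)}
    [P.IsPrime] {p : ℕ} (hp : p.Prime) (h : (p : Localization.AtPrime 𝔭) ∈ P) :
    P = maximalIdeal (Localization.AtPrime 𝔭) := by
  rw [← Localization.AtPrime.eq_maximalIdeal_iff_under_eq]
  have hmax : (P.under B).IsMaximal :=
    Ideal.IsPrime.isMaximal_of_natCast_mem hp (by simpa using h)
  refine hmax.eq_of_le (Ideal.IsPrime.ne_top inferInstance) ?_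
  calc P.under B ≤ (maximalIdeal _).under B :=
        Ideal.comap_mono (le_maximalIdeal (Ideal.IsPrime.ne_top ‹_›))
    _ = 𝔭 := Localization.AtPrime.under_maximalIdeal

theorem IsPrimitiveRoot.sub_one_dvd_prime {R : Type*} [CommRing R] [IsDomain R] {u : R} {p r : ℕ}
    (hp : p.Prime) (hr : 0 < r) (hu : IsPrimitiveRoot u (p ^ r)) : u - 1 ∣ (p : R) := by
  have : Fact p.Prime := ⟨hp⟩
  have hroot := Polynomial.eval_dvd (x := 1)
    (Polynomial.dvd_iff_isRoot.2 (hu.isRoot_cyclotomic (pow_pos hp.pos r)))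
  obtain ⟨s, rfl⟩ := Nat.exists_eq_add_of_lt hr
  rw [zero_add, Polynomial.eval_one_cyclotomic_prime_pow] at hroot
  rw [← neg_sub, neg_dvd]
  simpa using hroot

theorem sub_one_mem_of_pow_prime_pow_eq_one {R : Type*} [CommRing R] {Q : Ideal R} [Q.IsPrime]
    {p r : ℕ} (hp : p.Prime) (hpQ : (p : R) ∈ Q) {u : R} (hu : u ^ p ^ r = 1) : u - 1 ∈ Q := by
  have : Fact p.Prime := ⟨hp⟩
  have : CharP (R ⧸ Q) p := (CharP.charP_iff_prime_eq_zero hp).2 <| by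
    simpa using Ideal.Quotient.eq_zero_iff_mem.2 hpQ
  rw [← Ideal.Quotient.eq_zero_iff_mem]
  refine pow_eq_zero_iff (pow_ne_zero r hp.ne_zero) |>.1 ?_
  rw [map_sub, map_one, sub_pow_char_pow, ← map_pow, hu, map_one, one_pow, sub_self]

theorem RingHom.ext_of_adjoin_int_eq_top {B S : Type*} [Ring B] [Ring S] {s : Set B}
    (hs : Algebra.adjoin ℤ s = ⊤) {f g : B →+* S} (hfg : Set.EqOn f g s) : f = g :=
  RingHom.toIntAlgHom_injective <| AlgHom.ext_of_adjoin_eq_top hs hfg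

section Generator

variable {B : Type*} [CommRing B] {t : B}

theorem IsLocalization.pow_char_pow_eq_self_of_surjective (hgen : Algebra.adjoin ℤ {t} = ⊤)
    (M : Submonoid B) {L : Type*} [CommRing L] [Algebra B L] [IsLocalization M L]
    {S : Type*} [CommRing S] {p s : ℕ} [ExpChar S p] {g : L →+* S} (hg : Function.Surjective g)
    (ht : g (algebraMap B L t) ^ p ^ s = g (algebraMap B L t)) (y : S) : y ^ p ^ s = y := by
  have hfrob : (iterateFrobenius S p s).comp g = g :=
    IsLocalization.ringHom_ext M <| RingHom.ext_of_adjoin_int_eq_top hgen <|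
      Set.eqOn_singleton.2 <| by simpa [iterateFrobenius_def] using ht
  obtain ⟨z, rfl⟩ := hg y
  simpa [iterateFrobenius_def] using congr($hfrob z)

theorem isRadical_span_pow_sub_one (hgen : Algebra.adjoin ℤ {t} = ⊤)
    (M : Submonoid B) (L : Type*) [CommRing L] [Algebra B L] [IsLocalization M L]
    {p k : ℕ} (hp : p.Prime) (hk : ¬ p ∣ k) (hdvd : t ^ k - 1 ∣ (p : B)) :
    (Ideal.span {algebraMap B L (t ^ k - 1)}).IsRadical := by
  set I := Ideal.span {algebraMap B L (t ^ k - 1)}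
  rw [Ideal.isRadical_iff_quotient_reduced]
  cases subsingleton_or_nontrivial (L ⧸ I)
  · infer_instance
  have : Fact p.Prime := ⟨hp⟩
  have : CharP (L ⧸ I) p := (CharP.charP_iff_prime_eq_zero hp).2 <| by
    rw [← map_natCast (Ideal.Quotient.mk I), Ideal.Quotient.eq_zero_iff_mem,
      ← map_natCast (algebraMap B L)]
    exact Ideal.mem_span_singleton.2 (map_dvd _ hdvd)
  set g := (Ideal.Quotient.mk I).comp (algebraMap B L)
  have hk0 : 0 < k := Nat.pos_of_ne_zero (by rintro rfl; exact hk (dvd_zero p))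
  have htk : g t ^ k = 1 := by
    rw [← map_pow, ← sub_eq_zero, ← map_one g, ← map_sub]
    exact Ideal.Quotient.eq_zero_iff_mem.2 (Ideal.mem_span_singleton_self _)
  obtain ⟨c, hc⟩ : k ∣ p ^ k.totient - 1 :=
    (Nat.modEq_iff_dvd' (Nat.one_le_pow _ _ hp.pos)).1
      (Nat.ModEq.pow_totient ((Nat.Prime.coprime_iff_not_dvd hp).2 hk)).symm
  have hts : g t ^ p ^ k.totient = g t := by
    rw [← Nat.sub_add_cancel (Nat.one_le_pow _ _ hp.pos), hc, pow_succ, pow_mul, htk, one_pow,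
      one_mul]
  refine isReduced_of_forall_pow_eq_self ?_
    (IsLocalization.pow_char_pow_eq_self_of_surjective hgen M Ideal.Quotient.mk_surjective hts)
  calc 2 ≤ p := hp.two_le
    _ ≤ p ^ k.totient := Nat.le_self_pow (Nat.totient_pos.2 hk0).ne' p

theorem maximalIdeal_eq_span_pow_sub_one [Algebra.IsIntegral ℤ B] (hgen : Algebra.adjoin ℤ {t} = ⊤)
    {𝔭 : Ideal B} [𝔭.IsPrime] {p k : ℕ} (hp : p.Prime) (hk : ¬ p ∣ k) (hmem : t ^ k - 1 ∈ 𝔭)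
    (hdvd : t ^ k - 1 ∣ (p : B)) :
    maximalIdeal (Localization.AtPrime 𝔭) =
      Ideal.span {algebraMap B (Localization.AtPrime 𝔭) (t ^ k - 1)} := by
  refine (eq_maximalIdeal_of_isRadical
    (isRadical_span_pow_sub_one hgen 𝔭.primeCompl _ hp hk hdvd) ?_ ?_).symm
  · rw [Ideal.span_le, Set.singleton_subset_iff]
    exact (IsLocalization.AtPrime.to_map_mem_maximal_iff _ 𝔭 _).2 hmem
  · intro P hP hIP
    refine Localization.AtPrime.eq_maximalIdeal_of_natCast_mem hp (hIP ?_)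
    rw [← map_natCast (algebraMap B _)]
    exact Ideal.mem_span_singleton.2 (map_dvd _ hdvd)

end Generator

theorem Algebra.adjoin_singleton_self_eq_top {R A : Type*} [CommSemiring R] [Semiring A]
    [Algebra R A] (x : A) :
    Algebra.adjoin R {(⟨x, Algebra.self_mem_adjoin_singleton R x⟩ : Algebra.adjoin R {x})} = ⊤ := by
  convert Algebra.adjoin_adjoin_coe_preimage (R := R) (s := {x})
  ext y
  simp [Subtype.ext_iff]

/-- Let `p` be a prime dividing `n`, write `n = k·q` with `q = p^r` the exact power of `p`
dividing `n` (so `gcd(k,p) = 1`), and let `ζ_n = exp(2πi/n)`, `ζ_q = ζ_n^k`.  Then for every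
maximal ideal `𝔭` of `ℤ[ζ_n]` lying above `p`, the maximal ideal of the localization of
`ℤ[ζ_n]` at `𝔭` is the principal ideal generated by `ζ_q - 1`. -/
theorem stmt_13 (p k r n : ℕ) (hp : p.Prime) (hr : 0 < r) (hk : ¬ p ∣ k)
    (hn : n = k * p ^ r)
    (ζ : ℂ) (hζ : ζ = Complex.exp (2 * Real.pi * Complex.I / n))
    (𝔭 : Ideal (Algebra.adjoin ℤ ({ζ} : Set ℂ))) (h𝔭 : 𝔭.IsMaximal)
    (habove : 𝔭.comap (algebraMap ℤ (Algebra.adjoin ℤ ({ζ} : Set ℂ))) =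
      Ideal.span {(p : ℤ)}) :
    haveI : 𝔭.IsPrime := h𝔭.isPrime
    IsLocalRing.maximalIdeal (Localization.AtPrime 𝔭) =
      Ideal.span {algebraMap (Algebra.adjoin ℤ ({ζ} : Set ℂ)) (Localization.AtPrime 𝔭)
        ((⟨ζ, Algebra.self_mem_adjoin_singleton ℤ ζ⟩ :
          Algebra.adjoin ℤ ({ζ} : Set ℂ)) ^ k - 1)} := by
  have hn0 : 0 < n := hn ▸ Nat.mul_pos (Nat.pos_of_ne_zero (by rintro rfl; exact hk (dvd_zero p)))
    (pow_pos hp.pos r)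
  have hζn : IsPrimitiveRoot ζ n := hζ ▸ Complex.isPrimitiveRoot_exp n hn0.ne'
  have : Algebra.IsIntegral ℤ (Algebra.adjoin ℤ ({ζ} : Set ℂ)) :=
    Algebra.IsIntegral.adjoin fun y hy => hy ▸ hζn.isIntegral hn0
  have hζq : IsPrimitiveRoot ((⟨ζ, Algebra.self_mem_adjoin_singleton ℤ ζ⟩ :
      Algebra.adjoin ℤ ({ζ} : Set ℂ)) ^ k) (p ^ r) :=
    (IsPrimitiveRoot.coe_submonoidClass_iff.1 hζn).pow hn0 hn
  have hp𝔭 : (p : Algebra.adjoin ℤ ({ζ} : Set ℂ)) ∈ 𝔭 := by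
    simpa using habove.ge (Ideal.mem_span_singleton_self (p : ℤ))
  exact maximalIdeal_eq_span_pow_sub_one (Algebra.adjoin_singleton_self_eq_top ζ) hp hk
    (sub_one_mem_of_pow_prime_pow_eq_one hp hp𝔭 hζq.pow_eq_one) (hζq.sub_one_dvd_prime hp hr)
end
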